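/- arXiv:1811.11560 — 2 statements merged into one kernel-verified Lean document; each statement's English description precedes it below -/
import Mathlib

section
/- Let $a, b$ satisfy $0 < b \le a \le 1$. Then there exists a complex polynomial $p$ such that: (1) the sum of absolute values of its coefficients equals $1$; (2) $\sup_{z \in \overline{\mathbb{D}}} |p(z)| = a$; (3) $\sup_{x \in [-1,1]} |p(x)| = b$ and $p(1) = b$. -/
open Polynomial

/-- The sum of the absolute values of the coefficients of a polynomial. -/
noncomputable def l1 (f : Polynomial ℂ) : ℝ := ∑ k ∈ f.support, ‖f.coeff k‖

/-!
The polynomial is `P + c * Q * X ^ K` with `deg P < K`, so that `l1` is additive.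

`P = ∏_{j ≤ n} (-μ + t X^{4·3^j} + 2μ X^{8·3^j})` is a lacunary product: its `l1` norm is
`(t + 3μ)^(n+1)`, while for `8μ ≤ t` each factor has modulus at most `t + μ` on the disc, with
equality at `1` and `i`. Choosing `μ, t, n` with `(t + 3μ)^(n+1) = 1 - a + b` and
`(t + μ)^(n+1) = b` makes `P` carry the surplus `l1` mass `1 - a` without raising its maximum `b`.
On `[-1, 1]` the first factor is at most `μ + t x⁴`, which leaves room `t (t + μ)^n (1 - x²)`.

`Q = ∏_{j < 2k+2} (X^{2·3^j} - 1)` has `l1 Q = |Q(i)| = 4^(k+1)`, vanishes at `1` and is at most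
`1 - x²` on `[-1, 1]`. With `c 4^(k+1) = a - b` and `k` large, `c Q X^K` raises the value at `i` to
`a` and fits into the room left by `P` on the real segment.
-/

open Finset

noncomputable def sparseQuadratic (α β γ : ℂ) (D : ℕ) : ℂ[X] :=
  C α + C β * X ^ D + C γ * X ^ (2 * D)

noncomputable def lacunaryProduct (α β γ : ℂ) (d n : ℕ) : ℂ[X] :=
  ∏ j ∈ range n, sparseQuadratic α β γ (d * 3 ^ j)

lemma l1_eq_sum_range {f : ℂ[X]} {N : ℕ} (h : f.natDegree < N) :
    l1 f = ∑ k ∈ range N, ‖f.coeff k‖ :=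
  sum_subset (supp_subset_range h) fun k _ hk => by simp [notMem_support_iff.mp hk]

lemma l1_C (c : ℂ) : l1 (C c) = ‖c‖ := by
  simp [l1_eq_sum_range (f := C c) (N := 1) (by simp)]

lemma l1_C_mul (c : ℂ) (f : ℂ[X]) : l1 (C c * f) = ‖c‖ * l1 f := by
  have hf := Nat.lt_succ_self f.natDegree
  rw [l1_eq_sum_range ((natDegree_C_mul_le c f).trans_lt hf), l1_eq_sum_range hf, mul_sum]
  simp [coeff_C_mul]

lemma l1_add_mul_X_pow {f : ℂ[X]} {D : ℕ} (hf : f.natDegree < D) (g : ℂ[X]) :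
    l1 (f + g * X ^ D) = l1 f + l1 g := by
  have hg := Nat.lt_succ_self g.natDegree
  have hfg : (f + g * X ^ D).natDegree < D + (g.natDegree + 1) := by
    refine (natDegree_add_le _ _).trans_lt (max_lt (by omega) ?_)
    refine (natDegree_mul_le).trans_lt ?_
    have := natDegree_X_pow_le (R := ℂ) D
    omega
  rw [l1_eq_sum_range hfg, sum_range_add, l1_eq_sum_range hf, l1_eq_sum_range hg]
  congr 1
  · refine sum_congr rfl fun k hk => ?_
    rw [coeff_add, coeff_mul_X_pow', if_neg (by simp at hk; omega), add_zero]
  · refine sum_congr rfl fun k _ => ?_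
    rw [coeff_add, coeff_eq_zero_of_natDegree_lt (by omega), zero_add, add_comm, coeff_mul_X_pow]

lemma eval_sparseQuadratic (α β γ : ℂ) (D : ℕ) (z : ℂ) :
    (sparseQuadratic α β γ D).eval z = α + β * z ^ D + γ * (z ^ D) ^ 2 := by
  simp [sparseQuadratic, ← pow_mul, mul_comm D 2]

lemma natDegree_sparseQuadratic_le (α β γ : ℂ) (D : ℕ) :
    (sparseQuadratic α β γ D).natDegree ≤ 2 * D := by
  unfold sparseQuadratic
  compute_degree
  omega

lemma l1_mul_sparseQuadratic {f : ℂ[X]} {D : ℕ} (hf : f.natDegree < D) (α β γ : ℂ) :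
    l1 (f * sparseQuadratic α β γ D) = l1 f * (‖α‖ + ‖β‖ + ‖γ‖) := by
  have h : f * sparseQuadratic α β γ D = C α * f + (C β * f + (C γ * f) * X ^ D) * X ^ D := by
    simp only [sparseQuadratic]; ring
  have hdeg : ∀ c, (C c * f).natDegree < D := fun c => (natDegree_C_mul_le c f).trans_lt hf
  rw [h, l1_add_mul_X_pow (hdeg α), l1_add_mul_X_pow (hdeg β), l1_C_mul, l1_C_mul, l1_C_mul]
  ring

section lacunaryProduct

variable {α β γ : ℂ} {d : ℕ}

lemma natDegree_lacunaryProduct_lt (hd : 0 < d) (n : ℕ) :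
    (lacunaryProduct α β γ d n).natDegree < d * 3 ^ n := by
  induction n with
  | zero => simpa [lacunaryProduct] using hd
  | succ n ih =>
    rw [lacunaryProduct, prod_range_succ, ← lacunaryProduct]
    have := natDegree_sparseQuadratic_le α β γ (d * 3 ^ n)
    calc _ ≤ _ := natDegree_mul_le
      _ < d * 3 ^ n + 2 * (d * 3 ^ n) := by omega
      _ = d * 3 ^ (n + 1) := by ring

lemma l1_lacunaryProduct (hd : 0 < d) (n : ℕ) :
    l1 (lacunaryProduct α β γ d n) = (‖α‖ + ‖β‖ + ‖γ‖) ^ n := by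
  induction n with
  | zero => simpa [lacunaryProduct] using l1_C 1
  | succ n ih =>
    rw [lacunaryProduct, prod_range_succ, ← lacunaryProduct,
      l1_mul_sparseQuadratic (natDegree_lacunaryProduct_lt hd n), ih, pow_succ]

lemma lacunaryProduct_succ' (n : ℕ) :
    lacunaryProduct α β γ d (n + 1) =
      lacunaryProduct α β γ (3 * d) n * sparseQuadratic α β γ d := by
  have h : ∀ j, d * 3 ^ (j + 1) = 3 * d * 3 ^ j := fun j => by ring
  simp only [lacunaryProduct, prod_range_succ', h, pow_zero, mul_one]

lemma eval_lacunaryProduct_eq_pow {z w : ℂ}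
    (h : ∀ j, (sparseQuadratic α β γ (d * 3 ^ j)).eval z = w) (n : ℕ) :
    (lacunaryProduct α β γ d n).eval z = w ^ n := by
  rw [lacunaryProduct, eval_prod, prod_congr rfl fun j _ => h j, prod_const, card_range]

lemma norm_eval_lacunaryProduct_le {z : ℂ} {M : ℝ}
    (h : ∀ j, ‖(sparseQuadratic α β γ (d * 3 ^ j)).eval z‖ ≤ M) (n : ℕ) :
    ‖(lacunaryProduct α β γ d n).eval z‖ ≤ M ^ n := by
  rw [lacunaryProduct, eval_prod, norm_prod]
  calc _ ≤ ∏ _j ∈ range n, M := prod_le_prod (fun _ _ => norm_nonneg _) fun j _ => h j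
    _ = M ^ n := by rw [prod_const, card_range]

end lacunaryProduct

lemma norm_neg_add_mul_add_two_mul_sq_le {μ t : ℝ} (hμ : 0 ≤ μ) (ht : 8 * μ ≤ t) {w : ℂ}
    (hw : ‖w‖ ≤ 1) : ‖-(μ : ℂ) + t * w + 2 * μ * w ^ 2‖ ≤ t + μ := by
  set x := w.re
  set s := w.re ^ 2 + w.im ^ 2
  have hs : s ≤ 1 := by
    have := Complex.sq_norm w
    rw [Complex.normSq_apply] at this
    nlinarith [norm_nonneg w]
  have hx : x ^ 2 ≤ 1 := by nlinarith [sq_nonneg w.im]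
  have hx1 : x ≤ 1 := by nlinarith
  -- `(t + μ)² - ‖·‖²` is exactly `2 * hbdry + hrad`; `hbdry ≥ 0` is where `8μ ≤ t` is needed.
  have hbdry : 0 ≤ μ * (1 - x) * (t - 4 * μ * (1 + x)) :=
    mul_nonneg (mul_nonneg hμ (by linarith)) (by nlinarith)
  have hrad :
      0 ≤ (1 - s) * ((t + 2 * μ * x) ^ 2 + 4 * μ ^ 2 * (1 - x ^ 2) + 4 * μ ^ 2 * (1 + s)) :=
    mul_nonneg (by linarith) (by positivity)
  have hsq : ‖-(μ : ℂ) + t * w + 2 * μ * w ^ 2‖ ^ 2 ≤ (t + μ) ^ 2 := by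
    rw [Complex.sq_norm, Complex.normSq_apply]
    simp only [Complex.add_re, Complex.add_im, Complex.mul_re, Complex.mul_im, Complex.neg_re,
      Complex.neg_im, Complex.ofReal_re, Complex.ofReal_im, Complex.re_ofNat, Complex.im_ofNat,
      pow_two]
    linear_combination 2 * hbdry + hrad
  exact (pow_le_pow_iff_left₀ (norm_nonneg _) (by linarith) two_ne_zero).mp hsq

section factors

variable {μ t : ℝ} (hμ : 0 ≤ μ) (ht : 8 * μ ≤ t)
include hμ ht

lemma norm_eval_sparseQuadratic_le {z : ℂ} (hz : ‖z‖ ≤ 1) (D : ℕ) :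
    ‖(sparseQuadratic (-μ) t (2 * μ) D).eval z‖ ≤ t + μ := by
  rw [eval_sparseQuadratic]
  exact norm_neg_add_mul_add_two_mul_sq_le hμ ht
    (by rw [norm_pow]; exact pow_le_one₀ (norm_nonneg z) hz)

lemma norm_eval_sparseQuadratic_four_le {x : ℝ} (hx : |x| ≤ 1) :
    ‖(sparseQuadratic (-μ) t (2 * μ) 4).eval (x : ℂ)‖ ≤ μ + t * x ^ 4 := by
  have hx8 : x ^ 8 ≤ 1 := by
    rw [show x ^ 8 = |x| ^ 8 by rw [pow_abs, abs_of_nonneg (by positivity)]]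
    exact pow_le_one₀ (abs_nonneg x) hx
  rw [eval_sparseQuadratic, show -(μ : ℂ) + t * x ^ 4 + 2 * μ * ((x : ℂ) ^ 4) ^ 2
      = ((-μ + t * x ^ 4 + 2 * μ * x ^ 8 : ℝ) : ℂ) by push_cast; ring,
    Complex.norm_real, Real.norm_eq_abs, abs_le]
  constructor <;> nlinarith [pow_nonneg (sq_nonneg x) 2, pow_nonneg (sq_nonneg x) 4]

lemma norm_eval_real_lacunaryProduct_le {x : ℝ} (hx : |x| ≤ 1) (n : ℕ) :
    ‖(lacunaryProduct (-μ) t (2 * μ) 4 (n + 1)).eval (x : ℂ)‖ ≤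
      (t + μ) ^ n * (μ + t * x ^ 4) := by
  have hxz : ‖(x : ℂ)‖ ≤ 1 := by rwa [Complex.norm_real, Real.norm_eq_abs]
  rw [lacunaryProduct_succ', eval_mul, norm_mul]
  exact mul_le_mul
    (norm_eval_lacunaryProduct_le (fun j => norm_eval_sparseQuadratic_le hμ ht hxz _) n)
    (norm_eval_sparseQuadratic_four_le hμ ht hx) (norm_nonneg _)
    (by have : 0 ≤ t := by linarith
        positivity)

end factors

lemma norm_eval_sparseQuadratic_neg_one_le_two {z : ℂ} (hz : ‖z‖ ≤ 1) (D : ℕ) :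
    ‖(sparseQuadratic (-1) 0 1 D).eval z‖ ≤ 2 := by
  rw [eval_sparseQuadratic, zero_mul, add_zero, one_mul]
  calc _ ≤ ‖(-1 : ℂ)‖ + ‖(z ^ D) ^ 2‖ := norm_add_le _ _
    _ ≤ 1 + 1 := by
      rw [norm_neg, norm_one, norm_pow, norm_pow]
      gcongr
      exact pow_le_one₀ (pow_nonneg (norm_nonneg z) D) (pow_le_one₀ (norm_nonneg z) hz)
    _ = 2 := by norm_num

lemma norm_eval_sparseQuadratic_neg_one_real_le_one {x : ℝ} (hx : |x| ≤ 1) (D : ℕ) :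
    ‖(sparseQuadratic (-1) 0 1 D).eval (x : ℂ)‖ ≤ 1 := by
  have h : (x ^ D) ^ 2 ≤ 1 := by
    rw [← pow_mul, mul_comm, pow_mul, ← sq_abs]
    exact pow_le_one₀ (sq_nonneg _) (pow_le_one₀ (abs_nonneg x) hx)
  rw [eval_sparseQuadratic, show (-1 : ℂ) + 0 * (x : ℂ) ^ D + 1 * ((x : ℂ) ^ D) ^ 2
      = (((x ^ D) ^ 2 - 1 : ℝ) : ℂ) by push_cast; ring,
    Complex.norm_real, Real.norm_eq_abs, abs_le]
  constructor <;> nlinarith [sq_nonneg (x ^ D)]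

lemma norm_eval_real_lacunaryProduct_neg_one_le {x : ℝ} (hx : |x| ≤ 1) (m : ℕ) :
    ‖(lacunaryProduct (-1) 0 1 1 (m + 1)).eval (x : ℂ)‖ ≤ 1 - x ^ 2 := by
  have hx2 : x ^ 2 ≤ 1 := by rw [← sq_abs]; exact pow_le_one₀ (abs_nonneg x) hx
  have hfirst : ‖(sparseQuadratic (-1) 0 1 1).eval (x : ℂ)‖ = 1 - x ^ 2 := by
    rw [eval_sparseQuadratic, show (-1 : ℂ) + 0 * (x : ℂ) ^ 1 + 1 * ((x : ℂ) ^ 1) ^ 2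
        = ((x ^ 2 - 1 : ℝ) : ℂ) by push_cast; ring,
      Complex.norm_real, Real.norm_eq_abs, abs_of_nonpos (by linarith), neg_sub]
  rw [lacunaryProduct_succ', eval_mul, norm_mul, hfirst]
  calc _ ≤ 1 * (1 - x ^ 2) := by
        gcongr
        · simpa using norm_eval_lacunaryProduct_le
            (fun j => norm_eval_sparseQuadratic_neg_one_real_le_one hx _) m
    _ = 1 - x ^ 2 := one_mul _

lemma eval_one_sparseQuadratic (α β γ : ℂ) (D : ℕ) :
    (sparseQuadratic α β γ D).eval 1 = α + β + γ := by
  simp [eval_sparseQuadratic]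

lemma eval_I_sparseQuadratic_four_mul (α β γ : ℂ) (m : ℕ) :
    (sparseQuadratic α β γ (4 * m)).eval Complex.I = α + β + γ := by
  simp [eval_sparseQuadratic, pow_mul, Complex.I_pow_four]

lemma eval_I_sparseQuadratic_neg_one_of_odd {D : ℕ} (hD : Odd D) :
    (sparseQuadratic (-1) 0 1 D).eval Complex.I = -2 := by
  rw [eval_sparseQuadratic, ← pow_mul, mul_comm D 2, pow_mul, Complex.I_sq, hD.neg_one_pow]
  norm_num

noncomputable def witnessPoly (μ t c : ℝ) (n k : ℕ) : ℂ[X] :=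
  lacunaryProduct (-μ) t (2 * μ) 4 (n + 1) +
    C (c : ℂ) * lacunaryProduct (-1) 0 1 1 (2 * (k + 1)) * X ^ (4 * 3 ^ (n + 1))

section witnessPoly

variable {μ t c : ℝ} (n k : ℕ)

lemma l1_witnessPoly (hμ : 0 ≤ μ) (ht : 8 * μ ≤ t) (hc : 0 ≤ c) :
    l1 (witnessPoly μ t c n k) = (t + 3 * μ) ^ (n + 1) + c * 4 ^ (k + 1) := by
  rw [witnessPoly, l1_add_mul_X_pow (natDegree_lacunaryProduct_lt (by norm_num) _),
    l1_C_mul, l1_lacunaryProduct (by norm_num), l1_lacunaryProduct (by norm_num)]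
  simp [abs_of_nonneg hμ, abs_of_nonneg hc, abs_of_nonneg (show 0 ≤ t by linarith), pow_mul]
  ring

lemma eval_one_witnessPoly : (witnessPoly μ t c n k).eval 1 = ((t + μ) ^ (n + 1) : ℝ) := by
  rw [witnessPoly, eval_add, eval_mul, eval_mul,
    eval_lacunaryProduct_eq_pow (w := t + μ) (fun j => by rw [eval_one_sparseQuadratic]; ring),
    eval_lacunaryProduct_eq_pow (w := 0) (fun j => by rw [eval_one_sparseQuadratic]; ring)]
  simp

lemma eval_I_witnessPoly :
    (witnessPoly μ t c n k).eval Complex.I = ((t + μ) ^ (n + 1) + c * 4 ^ (k + 1) : ℝ) := by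
  rw [witnessPoly, eval_add, eval_mul, eval_mul,
    eval_lacunaryProduct_eq_pow (w := t + μ)
      (fun j => by rw [eval_I_sparseQuadratic_four_mul]; ring),
    eval_lacunaryProduct_eq_pow (w := -2)
      (fun j => eval_I_sparseQuadratic_neg_one_of_odd
        (by rw [one_mul]; exact Odd.pow ⟨1, rfl⟩))]
  rw [eval_C, eval_pow, eval_X, pow_mul, pow_mul, Complex.I_pow_four, one_pow, mul_one]
  push_cast
  ring

lemma norm_eval_witnessPoly_le (hμ : 0 ≤ μ) (ht : 8 * μ ≤ t) (hc : 0 ≤ c) {z : ℂ}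
    (hz : ‖z‖ ≤ 1) :
    ‖(witnessPoly μ t c n k).eval z‖ ≤ (t + μ) ^ (n + 1) + c * 4 ^ (k + 1) := by
  rw [witnessPoly, eval_add, eval_mul, eval_mul, eval_C, eval_pow, eval_X]
  refine (norm_add_le _ _).trans (add_le_add
    (norm_eval_lacunaryProduct_le (fun j => norm_eval_sparseQuadratic_le hμ ht hz _) _) ?_)
  rw [norm_mul, norm_mul, Complex.norm_real, Real.norm_eq_abs, abs_of_nonneg hc, norm_pow,
    show (4 : ℝ) ^ (k + 1) = 2 ^ (2 * (k + 1)) by rw [pow_mul]; norm_num]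
  calc _ ≤ c * 2 ^ (2 * (k + 1)) * 1 := by
        gcongr
        · exact norm_eval_lacunaryProduct_le
            (fun j => norm_eval_sparseQuadratic_neg_one_le_two hz _) _
        · exact pow_le_one₀ (norm_nonneg z) hz
    _ = _ := mul_one _

lemma norm_eval_real_witnessPoly_le (hμ : 0 ≤ μ) (ht : 8 * μ ≤ t) (hc : 0 ≤ c)
    (hct : c ≤ t * (t + μ) ^ n) {x : ℝ} (hx : |x| ≤ 1) :
    ‖(witnessPoly μ t c n k).eval (x : ℂ)‖ ≤ (t + μ) ^ (n + 1) := by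
  have hx2 : x ^ 2 ≤ 1 := by rw [← sq_abs]; exact pow_le_one₀ (abs_nonneg x) hx
  have hbump : ‖(C (c : ℂ) * lacunaryProduct (-1) 0 1 1 (2 * (k + 1)) *
      X ^ (4 * 3 ^ (n + 1))).eval (x : ℂ)‖ ≤ c * (1 - x ^ 2) := by
    rw [eval_mul, eval_mul, eval_C, eval_pow, eval_X, norm_mul, norm_mul, norm_pow,
      Complex.norm_real, Real.norm_eq_abs, abs_of_nonneg hc,
      show 2 * (k + 1) = 2 * k + 1 + 1 by ring]
    calc _ ≤ c * (1 - x ^ 2) * 1 := by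
          gcongr
          · exact norm_eval_real_lacunaryProduct_neg_one_le hx _
          · exact pow_le_one₀ (norm_nonneg _) (by rwa [Complex.norm_real, Real.norm_eq_abs])
      _ = c * (1 - x ^ 2) := mul_one _
  rw [witnessPoly, eval_add]
  calc _ ≤ (t + μ) ^ n * (μ + t * x ^ 4) + c * (1 - x ^ 2) :=
        (norm_add_le _ _).trans (add_le_add (norm_eval_real_lacunaryProduct_le hμ ht hx n) hbump)
    _ ≤ (t + μ) ^ n * (μ + t * x ^ 4) + t * (t + μ) ^ n * (1 - x ^ 2) := by gcongr
    _ ≤ (t + μ) ^ (n + 1) := by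
      rw [pow_succ (t + μ) n]
      have hgap : 0 ≤ (t + μ) ^ n * (t * (x ^ 2 * (1 - x ^ 2))) :=
        mul_nonneg (pow_nonneg (by linarith) n)
          (mul_nonneg (by linarith) (mul_nonneg (sq_nonneg x) (sub_nonneg.2 hx2)))
      linear_combination hgap

end witnessPoly

lemma exists_lacunaryProduct_params {b S : ℝ} (hb : 0 < b) (hbS : b ≤ S) :
    ∃ (n : ℕ) (μ t : ℝ), 0 ≤ μ ∧ 8 * μ ≤ t ∧ 0 < t ∧
      (t + μ) ^ (n + 1) = b ∧ (t + 3 * μ) ^ (n + 1) = S := by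
  obtain ⟨n, hn⟩ := pow_unbounded_of_one_lt (S / b) (by norm_num : (1 : ℝ) < 11 / 9)
  have hN : n + 1 ≠ 0 := n.succ_ne_zero
  set v := b ^ ((n + 1 : ℕ)⁻¹ : ℝ)
  set V := S ^ ((n + 1 : ℕ)⁻¹ : ℝ)
  have hv0 : 0 < v := by positivity
  have hV0 : 0 < V := Real.rpow_pos_of_pos (hb.trans_le hbS) _
  have hv : v ^ (n + 1) = b := Real.rpow_inv_natCast_pow hb.le hN
  have hV : V ^ (n + 1) = S := Real.rpow_inv_natCast_pow (hb.le.trans hbS) hN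
  have hvV : v ≤ V := (pow_le_pow_iff_left₀ hv0.le hV0.le hN).mp (by rw [hv, hV]; exact hbS)
  have hVv : V ≤ 11 / 9 * v := by
    refine (pow_le_pow_iff_left₀ hV0.le (by positivity) hN).mp ?_
    rw [hV, mul_pow, hv]
    rw [div_lt_iff₀ hb] at hn
    calc S ≤ (11 / 9) ^ n * b := hn.le
      _ ≤ (11 / 9) ^ (n + 1) * b := by gcongr <;> norm_num
  refine ⟨n, (V - v) / 2, (3 * v - V) / 2, by linarith, by linarith, by linarith, ?_, ?_⟩
  · rw [← hv]; ring_nf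
  · rw [← hV]; ring_nf

lemma ciSup_eq_of_forall_le_of_eq {α ι : Type*} [ConditionallyCompleteLattice α] {f : ι → α}
    {M : α} (hle : ∀ i, f i ≤ M) (i₀ : ι) (h₀ : f i₀ = M) : ⨆ i, f i = M :=
  haveI : Nonempty ι := ⟨i₀⟩
  le_antisymm (ciSup_le hle) (h₀ ▸ le_ciSup ⟨M, Set.forall_mem_range.2 hle⟩ i₀)

theorem stmt_13 (a b : ℝ) (hb : 0 < b) (hba : b ≤ a) (ha : a ≤ 1) :
    ∃ p : Polynomial ℂ, l1 p = 1 ∧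
      (⨆ z : Metric.closedBall (0 : ℂ) 1, ‖p.eval (z : ℂ)‖) = a ∧
      (⨆ x : Set.Icc (-1 : ℝ) 1, ‖p.eval ((x : ℝ) : ℂ)‖) = b ∧
      p.eval 1 = (b : ℂ) := by
  obtain ⟨n, μ, t, hμ, ht, ht0, hb', hS⟩ :=
    exists_lacunaryProduct_params hb (show b ≤ 1 - a + b by linarith)
  obtain ⟨k, hk⟩ :=
    pow_unbounded_of_one_lt ((a - b) / (t * (t + μ) ^ n)) (by norm_num : (1 : ℝ) < 4)
  set c := (a - b) / 4 ^ (k + 1)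
  have hc : 0 ≤ c := div_nonneg (by linarith) (by positivity)
  have hc4 : c * 4 ^ (k + 1) = a - b := div_mul_cancel₀ _ (by positivity)
  have hct : c ≤ t * (t + μ) ^ n := by
    rw [div_lt_iff₀ (by positivity)] at hk
    rw [div_le_iff₀ (by positivity), pow_succ]
    nlinarith [pow_pos (by norm_num : (0 : ℝ) < 4) k, pow_pos (by linarith : 0 < t + μ) n]
  refine ⟨witnessPoly μ t c n k, ?_, ?_, ?_, ?_⟩
  · rw [l1_witnessPoly n k hμ ht hc, hS, hc4]
    ring
  · refine ciSup_eq_of_forall_le_of_eq (fun z => ?_) ⟨Complex.I, by simp⟩ ?_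
    · linarith [norm_eval_witnessPoly_le n k hμ ht hc (mem_closedBall_zero_iff.mp z.2)]
    · rw [eval_I_witnessPoly, hb', hc4, add_sub_cancel, Complex.norm_real,
        Real.norm_of_nonneg (by linarith)]
  · refine ciSup_eq_of_forall_le_of_eq (fun x => ?_) ⟨1, by norm_num, le_rfl⟩ ?_
    · exact hb' ▸ norm_eval_real_witnessPoly_le n k hμ ht hc hct (abs_le.mpr x.2)
    · rw [Complex.ofReal_one, eval_one_witnessPoly, hb', Complex.norm_real,
        Real.norm_of_nonneg hb.le]
  · rw [eval_one_witnessPoly, hb']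
end

section
/- Fix $0 < b \le 1$ with $b^{1/k} > \frac{-5+4\sqrt{2}}{7}$ for some positive integer $k$, and suppose $p$ is a polynomial with $|p|_1 = 1$, $p(1) = b^{1/k}$, $\sup_{x\in[-1,1]}|p(x)| \le b^{1/k}$. Define $w_{l+1}(z) = w_l(z) \cdot p(z^{4\deg w_l + 1})$ with $w_0 = p$, and $w := w_{k-1}$. Then $|w|_1 = 1$, $w(1) = b$, and $\sup_{x\in[-1,1]} |w(x)| \le b$. -/
/-!
With `c = b ^ (1 / k)`, each step `w ↦ w · p(X ^ m)` with `m > deg w` multiplies `|·|₁` by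
`|p|₁ = 1` (no two monomials of the product collide), the value at `1` by `p(1) = c`, and the sup
over `[-1, 1]` by at most `c` (as `x ↦ x ^ m` maps `[-1, 1]` into itself). By induction
`w_l` has `|w_l|₁ = 1`, `w_l(1) = c ^ (l + 1)` and sup at most `c ^ (l + 1)`; finally `c ^ k = b`.
-/

open Polynomial

lemma l1_eq_sum_fin (f : ℂ[X]) {N : ℕ} (h : f.natDegree < N) :
    l1 f = ∑ n : Fin N, ‖f.coeff n‖ := by
  rw [l1, Fin.sum_univ_eq_sum_range (fun n => ‖f.coeff n‖)]
  refine Finset.sum_subset (supp_subset_range h) fun n _ hn => ?_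
  rw [notMem_support_iff.mp hn, norm_zero]

lemma coeff_mul_expand_add_mul {R : Type*} [CommSemiring R] {f : R[X]} {m i : ℕ}
    (hf : f.natDegree < m) (hi : i < m) (p : R[X]) (j : ℕ) :
    (f * expand R m p).coeff (i + m * j) = f.coeff i * p.coeff j := by
  have hm : 0 < m := hi.trans_le' (Nat.zero_le i)
  rw [coeff_mul, Finset.sum_eq_single (i, m * j), coeff_expand_mul' hm]
  · rintro ⟨a, c⟩ hac hne
    rw [Finset.HasAntidiagonal.mem_antidiagonal] at hac
    by_cases hfa : f.coeff a = 0
    · rw [hfa, zero_mul]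
    by_cases hmc : m ∣ c
    · obtain ⟨t, rfl⟩ := hmc
      have ha : a < m := (le_natDegree_of_ne_zero hfa).trans_lt hf
      have hai : a = i := by
        simpa [Nat.mod_eq_of_lt ha, Nat.mod_eq_of_lt hi] using congrArg (· % m) hac
      have htj : t = j := Nat.eq_of_mul_eq_mul_left hm (by omega)
      exact absurd (by rw [hai, htj]) hne
    · rw [coeff_expand hm, if_neg hmc, mul_zero]
  · simp

lemma l1_mul_expand {f : ℂ[X]} {m : ℕ} (hf : f.natDegree < m) (p : ℂ[X]) :
    l1 (f * expand ℂ m p) = l1 f * l1 p := by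
  have hdeg : (f * expand ℂ m p).natDegree < (p.natDegree + 1) * m :=
    calc (f * expand ℂ m p).natDegree ≤ f.natDegree + p.natDegree * m := by
          simpa only [natDegree_expand] using natDegree_mul_le (p := f) (q := expand ℂ m p)
      _ < (p.natDegree + 1) * m := by rw [add_one_mul, add_comm]; omega
  rw [l1_eq_sum_fin _ hdeg, l1_eq_sum_fin f hf, l1_eq_sum_fin p p.natDegree.lt_succ_self,
    ← finProdFinEquiv.sum_comp, Fintype.sum_prod_type, Finset.sum_mul_sum, Finset.sum_comm]
  refine Finset.sum_congr rfl fun i _ => Finset.sum_congr rfl fun j _ => ?_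
  rw [finProdFinEquiv_apply_val, coeff_mul_expand_add_mul hf i.isLt, norm_mul]

lemma mem_Icc_neg_one_one_pow {x : ℝ} (hx : x ∈ Set.Icc (-1 : ℝ) 1) (n : ℕ) :
    x ^ n ∈ Set.Icc (-1 : ℝ) 1 := by
  rw [Set.mem_Icc, ← abs_le] at hx ⊢
  rw [abs_pow]
  exact pow_le_one₀ (abs_nonneg x) hx

def IsNormalizedPeak (f : ℂ[X]) (a : ℝ) : Prop :=
  l1 f = 1 ∧ f.eval 1 = a ∧ ∀ x ∈ Set.Icc (-1 : ℝ) 1, ‖f.eval (x : ℂ)‖ ≤ a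

lemma IsNormalizedPeak.mul_expand {f p : ℂ[X]} {a c : ℝ} (hf : IsNormalizedPeak f a)
    (hp : IsNormalizedPeak p c) {m : ℕ} (hm : f.natDegree < m) :
    IsNormalizedPeak (f * expand ℂ m p) (a * c) := by
  obtain ⟨hf1, hfe, hfs⟩ := hf
  obtain ⟨hp1, hpe, hps⟩ := hp
  refine ⟨by rw [l1_mul_expand hm, hf1, hp1, one_mul], ?_, fun x hx => ?_⟩
  · rw [eval_mul, expand_eval, one_pow, hfe, hpe, Complex.ofReal_mul]
  · have hpx : ‖(expand ℂ m p).eval (x : ℂ)‖ ≤ c := by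
      simpa only [expand_eval, Complex.ofReal_pow] using
        hps _ (mem_Icc_neg_one_one_pow hx m)
    rw [eval_mul, norm_mul]
    exact mul_le_mul (hfs x hx) hpx (norm_nonneg _) ((norm_nonneg _).trans (hfs x hx))

theorem stmt_19_general (b : ℝ) (hb : 0 < b) (k : ℕ) (hk : 0 < k)
    (p : Polynomial ℂ) (hp : l1 p = 1)
    (hp1 : p.eval 1 = ((b ^ ((1 : ℝ) / k) : ℝ) : ℂ))
    (hpint : ∀ x ∈ Set.Icc (-1 : ℝ) 1,
      ‖p.eval ((x : ℝ) : ℂ)‖ ≤ b ^ ((1 : ℝ) / k))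
    (w : ℕ → Polynomial ℂ) (h0 : w 0 = p)
    (hrec : ∀ l, w (l + 1) = w l * p.comp (X ^ (4 * (w l).natDegree + 1))) :
    l1 (w (k - 1)) = 1 ∧ (w (k - 1)).eval 1 = (b : ℂ) ∧
      ∀ x ∈ Set.Icc (-1 : ℝ) 1, ‖(w (k - 1)).eval ((x : ℝ) : ℂ)‖ ≤ b := by
  set c : ℝ := b ^ ((1 : ℝ) / k) with hc
  have hpeak : IsNormalizedPeak p c := ⟨hp, hp1, hpint⟩
  have hw : ∀ l, IsNormalizedPeak (w l) (c ^ (l + 1)) := by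
    intro l
    induction l with
    | zero => rwa [h0, zero_add, pow_one]
    | succ l ih =>
      rw [hrec, ← expand_eq_comp_X_pow, pow_succ]
      exact ih.mul_expand hpeak (by omega)
  have hck : c ^ k = b := by
    rw [hc, one_div, Real.rpow_inv_natCast_pow hb.le hk.ne']
  simpa only [IsNormalizedPeak, Nat.sub_add_cancel hk, hck] using hw (k - 1)

theorem stmt_19 (b : ℝ) (hb : 0 < b) (hb1 : b ≤ 1) (k : ℕ) (hk : 0 < k)
    (hb0 : b ^ ((1 : ℝ) / k) > (-5 + 4 * Real.sqrt 2) / 7)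
    (p : Polynomial ℂ) (hp : l1 p = 1)
    (hp1 : p.eval 1 = ((b ^ ((1 : ℝ) / k) : ℝ) : ℂ))
    (hpint : ∀ x ∈ Set.Icc (-1 : ℝ) 1,
      ‖p.eval ((x : ℝ) : ℂ)‖ ≤ b ^ ((1 : ℝ) / k))
    (w : ℕ → Polynomial ℂ) (h0 : w 0 = p)
    (hrec : ∀ l, w (l + 1) = w l * p.comp (X ^ (4 * (w l).natDegree + 1))) :
    l1 (w (k - 1)) = 1 ∧ (w (k - 1)).eval 1 = (b : ℂ) ∧
      ∀ x ∈ Set.Icc (-1 : ℝ) 1, ‖(w (k - 1)).eval ((x : ℝ) : ℂ)‖ ≤ b :=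
  stmt_19_general b hb k hk p hp hp1 hpint w h0 hrec
end
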